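/- arXiv:2510.01599 — 3 statements merged into one kernel-verified Lean document; each statement's English description precedes it below -/
import Mathlib

section
/- Let μ be a Borel probability measure on ℝ with finite first moment, and define Call(K) := ∫ max(x−K, 0) μ(dx). If μ({K}) = 0 for some K ∈ ℝ, then Call is differentiable at K with Call'(K) = −μ([K,∞)) = −μ((K,∞)). -/
open MeasureTheory Filter Set Topology

/-! Differentiate under the integral sign. Each payoff `k ↦ (x - k)⁺` is 1-Lipschitz, and for
`x ≠ K` it is differentiable at `K` with derivative `-1_{x > K}`. As `μ {K} = 0` this holds
`μ`-a.e., so the derivative of the call price at `K` is `-μ (K, ∞)`, which equals `-μ [K, ∞)`. -/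

lemma lipschitzWith_max_sub_zero (x : ℝ) : LipschitzWith 1 (fun y : ℝ => max (x - y) 0) :=
  (IsometryEquiv.subLeft x).isometry.lipschitz.max_const 0

lemma hasDerivAt_max_sub_zero {x K : ℝ} (hx : x ≠ K) :
    HasDerivAt (fun y => max (x - y) 0) (-(Ioi K).indicator 1 x) K := by
  rcases hx.lt_or_gt with hxK | hKx
  · have hflat : (fun y => max (x - y) 0) =ᶠ[𝓝 K] fun _ => 0 := by
      filter_upwards [Ioi_mem_nhds hxK] with y hy
      exact max_eq_right (sub_nonpos.2 hy.le)
    simpa [hxK.not_gt] using (hasDerivAt_const K (0 : ℝ)).congr_of_eventuallyEq hflat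
  · have hlin : (fun y => max (x - y) 0) =ᶠ[𝓝 K] fun y => x - y := by
      filter_upwards [Iio_mem_nhds hKx] with y hy
      exact max_eq_left (sub_nonneg.2 hy.le)
    simpa [hKx] using ((hasDerivAt_id K).const_sub x).congr_of_eventuallyEq hlin

lemma integrable_max_sub_zero {μ : Measure ℝ} [IsFiniteMeasure μ]
    (hμ : Integrable (fun x => |x|) μ) (K : ℝ) : Integrable (fun x => max (x - K) 0) μ :=
  (((integrable_norm_iff aestronglyMeasurable_id).1 hμ).sub (integrable_const K)).pos_part

theorem hasDerivAt_integral_max_sub_zero {μ : Measure ℝ} [IsFiniteMeasure μ]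
    (hμ : Integrable (fun x => |x|) μ) {K : ℝ} (hK : μ {K} = 0) :
    HasDerivAt (fun k => ∫ x, max (x - k) 0 ∂μ) (-μ.real (Ioi K)) K := by
  have hne : ∀ᵐ x ∂μ, x ≠ K := compl_mem_ae_iff.2 hK
  have hderiv := hasDerivAt_integral_of_dominated_loc_of_lip (F := fun k x => max (x - k) 0)
    (F' := fun x => -(Ioi K).indicator 1 x) (bound := fun _ => 1) univ_mem
    (Eventually.of_forall fun k => (integrable_max_sub_zero hμ k).aestronglyMeasurable)
    (integrable_max_sub_zero hμ K)
    ((measurable_const.indicator measurableSet_Ioi).neg.aestronglyMeasurable)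
    (Eventually.of_forall fun x => by simpa using lipschitzWith_max_sub_zero x)
    (integrable_const 1) (hne.mono fun x hx => hasDerivAt_max_sub_zero hx)
  simpa [integral_neg, integral_indicator_one measurableSet_Ioi] using hderiv.2

theorem stmt9 (μ : Measure ℝ) [IsProbabilityMeasure μ]
    (hμ1 : Integrable (fun x => |x|) μ)
    (Call : ℝ → ℝ) (hCall : ∀ K : ℝ, Call K = ∫ x, max (x - K) 0 ∂μ)
    (K : ℝ) (hK : μ {K} = 0) :
    HasDerivAt Call (-(μ (Set.Ici K)).toReal) K ∧
    μ (Set.Ici K) = μ (Set.Ioi K) := by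
  have hIci : μ (Ici K) = μ (Ioi K) := (measure_congr (Ioi_ae_eq_Ici' hK)).symm
  obtain rfl : Call = fun K => ∫ x, max (x - K) 0 ∂μ := funext hCall
  exact ⟨by simpa [Measure.real, hIci] using hasDerivAt_integral_max_sub_zero hμ1 hK, hIci⟩
end

section
/- Let μ be a Borel probability measure on ℝ with finite first moment, and define Call(K) := ∫ max(x−K, 0) μ(dx). Then for every twice continuously differentiable function g : ℝ → ℝ with compact support, ∫_ℝ g''(K) · Call(K) dK = ∫_ℝ g(x) μ(dx). That is, the second distributional derivative of the call price function with respect to the strike is the measure μ. -/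
open MeasureTheory Filter Set Topology

/- Since `g` and `g'` vanish near `-∞`, Taylor's formula with integral remainder gives
`g x = ∫_{K ≤ x} g''(K) (x - K) dK = ∫ g''(K) (x - K)⁺ dK`. Integrating in `x` against `μ` and
exchanging the integrals, which is legitimate because `g''` is bounded with compact support and
`μ` has a first moment, gives the claim. -/

lemma integral_mul_posPart_sub_eq {g : ℝ → ℝ} (hg : ContDiff ℝ 2 g)
    (hgc : HasCompactSupport g) (x : ℝ) : ∫ K, deriv (deriv g) K * max (x - K) 0 = g x := by
  have hdg : ContDiff ℝ 1 (deriv g) := hg.deriv' (n := 1)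
  have hg'' : Continuous (deriv (deriv g)) := hdg.continuous_deriv_one
  set F : ℝ → ℝ := fun K => deriv g K * (x - K) + g K
  have hF : ∀ K, HasDerivAt F (deriv (deriv g) K * (x - K)) K := fun K => by
    refine (((hdg.differentiable one_ne_zero K).hasDerivAt.mul
      ((hasDerivAt_id' K).const_sub x)).add
        (hg.differentiable two_ne_zero K).hasDerivAt).congr_deriv ?_
    ring
  have hF_atBot : Tendsto F atBot (𝓝 0) :=
    ((hgc.deriv.mul_right).add hgc).is_zero_at_infty.mono_left atBot_le_cocompact
  have hint : IntegrableOn (fun K => deriv (deriv g) K * (x - K)) (Iic x) :=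
    ((hg''.mul (continuous_const.sub continuous_id)).integrable_of_hasCompactSupport
      hgc.deriv.deriv.mul_right).integrableOn
  have hposPart : (fun K => deriv (deriv g) K * max (x - K) 0)
      = (Iic x).indicator (fun K => deriv (deriv g) K * (x - K)) := by
    ext K
    by_cases hK : K ≤ x
    · simp [hK]
    · simp [hK, max_eq_right (sub_nonpos.mpr (not_le.mp hK).le)]
  rw [hposPart, integral_indicator measurableSet_Iic,
    integral_Iic_of_hasDerivAt_of_tendsto' (fun K _ => hF K) hint hF_atBot]
  simp [F]

lemma integrable_uncurry_mul_posPart_sub {φ : ℝ → ℝ} (hφ : Continuous φ)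
    (hφc : HasCompactSupport φ) {μ : Measure ℝ} [IsFiniteMeasure μ]
    (hμ : Integrable (fun x => |x|) μ) :
    Integrable (Function.uncurry fun K x => φ K * max (x - K) 0) (volume.prod μ) := by
  have hbound : Integrable (fun p : ℝ × ℝ => |φ p.1| * |p.2| + |p.1 * φ p.1| * 1)
      (volume.prod μ) :=
    ((hφ.integrable_of_hasCompactSupport hφc).abs.mul_prod hμ).add
      (((continuous_id.mul hφ).integrable_of_hasCompactSupport hφc.mul_left).abs.mul_prod
        (integrable_const 1))
  refine hbound.mono' ?_ (ae_of_all _ fun ⟨K, x⟩ => ?_)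
  · exact ((hφ.comp continuous_fst).mul
      ((continuous_snd.sub continuous_fst).max continuous_const)).aestronglyMeasurable
  · have hmax : max (x - K) 0 ≤ |x| + |K| :=
      max_le ((le_abs_self _).trans (abs_sub _ _)) (by positivity)
    simp only [Function.uncurry, Real.norm_eq_abs, abs_mul,
      abs_of_nonneg (le_max_right (x - K) 0), mul_one]
    nlinarith [abs_nonneg (φ K)]

theorem stmt10 (μ : Measure ℝ) [IsProbabilityMeasure μ]
    (hμ1 : Integrable (fun x => |x|) μ)
    (Call : ℝ → ℝ) (hCall : ∀ K : ℝ, Call K = ∫ x, max (x - K) 0 ∂μ) :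
    ∀ g : ℝ → ℝ, ContDiff ℝ 2 g → HasCompactSupport g →
      ∫ K : ℝ, deriv (deriv g) K * Call K = ∫ x, g x ∂μ := by
  intro g hg hgc
  have hg'' : Continuous (deriv (deriv g)) := (hg.deriv' (n := 1)).continuous_deriv_one
  calc ∫ K, deriv (deriv g) K * Call K
      = ∫ K, ∫ x, deriv (deriv g) K * max (x - K) 0 ∂μ := by
        simp_rw [hCall, integral_const_mul]
    _ = ∫ x, (∫ K, deriv (deriv g) K * max (x - K) 0) ∂μ := integral_integral_swap
        (integrable_uncurry_mul_posPart_sub hg'' hgc.deriv.deriv hμ1)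
    _ = ∫ x, g x ∂μ := by simp_rw [integral_mul_posPart_sub_eq hg hgc]
end

section
/- Let P be a Borel probability measure on ℝ, let y* ∈ ℝ, and set γ := P((−∞, y*)). Let l > 0 and g ≥ 0 be real numbers and define k : ℝ → ℝ by k(y) = l if y < y* and k(y) = g otherwise. Then: (i) ∫ k dP = γ·l + (1−γ)·g; and (ii) if ∫_{(−∞,y*)} |y| P(dy) < ∞ and γ·l + (1−γ)·g > 0, then ∫_{(−∞,y*)} (y* − y) · k(y) / (γ·l + (1−γ)·g) P(dy) = (γ·y* − ∫_{(−∞,y*)} y P(dy)) · (γ + (g/l)·(1−γ))^{−1}. -/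
open MeasureTheory

theorem stmt11 (P : Measure ℝ) [IsProbabilityMeasure P]
    (ystar : ℝ) (γ : ℝ) (hγ : γ = (P (Set.Iio ystar)).toReal)
    (l g : ℝ) (hl : 0 < l) (hg : 0 ≤ g)
    (k : ℝ → ℝ) (hk : ∀ y : ℝ, k y = if y < ystar then l else g) :
    (∫ y, k y ∂P = γ * l + (1 - γ) * g) ∧
    (IntegrableOn (fun y => |y|) (Set.Iio ystar) P →
      0 < γ * l + (1 - γ) * g →
      ∫ y in Set.Iio ystar, (ystar - y) * k y / (γ * l + (1 - γ) * g) ∂P =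
        (γ * ystar - ∫ y in Set.Iio ystar, y ∂P) * (γ + (g / l) * (1 - γ))⁻¹) := by
  have hmeas : MeasurableSet (Set.Iio ystar) := measurableSet_Iio
  have hkl : ∀ y ∈ Set.Iio ystar, k y = l := by
    intro y hy; simp [hk, Set.mem_Iio.mp hy]
  have hkg : ∀ y ∈ (Set.Iio ystar)ᶜ, k y = g := by
    intro y hy
    simp only [Set.mem_compl_iff, Set.mem_Iio, not_lt] at hy
    simp [hk, not_lt.mpr hy]
  have hPfin : P (Set.Iio ystar) ≠ ⊤ := measure_ne_top P _
  have hcompl : (P (Set.Iio ystar)ᶜ).toReal = 1 - γ := by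
    rw [measure_compl hmeas hPfin, hγ]
    rw [measure_univ, ENNReal.toReal_sub_of_le prob_le_one ENNReal.one_ne_top]
    simp
  have hkeq : k = fun y => if y < ystar then l else g := funext hk
  have hkint : Integrable k P := by
    rw [hkeq]
    have : (fun y => if y < ystar then l else g) =
        (Set.Iio ystar).piecewise (fun _ => l) (fun _ => g) := by
      funext y; by_cases h : y < ystar <;> simp [Set.piecewise, h]
    rw [this]
    exact Integrable.piecewise hmeas ((integrable_const l).integrableOn) ((integrable_const g).integrableOn)
  have part1 : ∫ y, k y ∂P = γ * l + (1 - γ) * g := by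
    rw [← integral_add_compl hmeas hkint]
    rw [setIntegral_congr_fun hmeas hkl, setIntegral_congr_fun hmeas.compl hkg]
    rw [setIntegral_const, setIntegral_const, measureReal_def, measureReal_def, hcompl]
    simp only [smul_eq_mul, ← hγ]
  refine ⟨part1, fun hint hD => ?_⟩
  set D := γ * l + (1 - γ) * g with hDdef
  have hDne : D ≠ 0 := ne_of_gt hD
  have hlne : l ≠ 0 := ne_of_gt hl
  have hintid : IntegrableOn (fun y => y) (Set.Iio ystar) P := by
    have : AEStronglyMeasurable (fun y : ℝ => y) (P.restrict (Set.Iio ystar)) :=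
      aestronglyMeasurable_id
    have h2 := (integrable_norm_iff this).mp (by simpa [Real.norm_eq_abs] using hint.integrable)
    exact h2
  have hintc : IntegrableOn (fun _ : ℝ => ystar) (Set.Iio ystar) P := (integrableOn_const_iff).mpr (Or.inr hPfin.lt_top)
  have step1 : ∫ y in Set.Iio ystar, (ystar - y) * k y / D ∂P =
      ∫ y in Set.Iio ystar, (ystar - y) * (l / D) ∂P := by
    apply setIntegral_congr_fun hmeas
    intro y hy
    dsimp only
    rw [hkl y hy]; ring
  have step2 : ∫ y in Set.Iio ystar, (ystar - y) * (l / D) ∂P =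
      (∫ y in Set.Iio ystar, (ystar - y) ∂P) * (l / D) := integral_mul_const _ _
  have step3 : ∫ y in Set.Iio ystar, (ystar - y) ∂P =
      γ * ystar - ∫ y in Set.Iio ystar, y ∂P := by
    rw [integral_sub hintc hintid, setIntegral_const]
    simp only [Measure.restrict_apply_univ, smul_eq_mul, measureReal_def, ← hγ]
  have hinv : (γ + (g / l) * (1 - γ))⁻¹ = l / D := by
    have : γ + (g / l) * (1 - γ) = D / l := by
      field_simp [hDdef]; ring
    rw [this, inv_div]
  rw [step1, step2, step3, hinv]
end
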